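/- Let M be a multicell domain of G, V ⊆ ℝ[x,y] a linear subspace, d=(d₁,d₂,d₃)∈ℤ³_{≥0}, and r = min{d₁,d₂,d₃}. Then the strongly regular spline space is contained in the spline space with edge smoothness d, Ŝ^d(M,V) ⊆ S^d(M,V), and every f ∈ Ŝ^d(M,V) is globally of class C^r on M*, i.e., D_s f is continuous on M* for every s∈ℤ³_{≥0} with s₁+s₂+s₃ ≤ r. -/

import Mathlib

/- ## The three-directional (type-I) grid -/

noncomputable section

open MvPolynomial Set Function

/-- Points of the plane. -/
abbrev Pt := ℝ × ℝ

/-- Bivariate real polynomials `ℝ[x,y]`. -/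
abbrev BPoly := MvPolynomial (Fin 2) ℝ

/-- Evaluation of a bivariate polynomial at a point of the plane. -/
def evalP (q : BPoly) (p : Pt) : ℝ := MvPolynomial.eval ![p.1, p.2] q

/-- Triangles of the three-directional grid `G`:  `⟨v, false⟩` is the "lower"
triangle with vertices `v, v+(1,0), v+(1,1)`, and `⟨v, true⟩` is the "upper"
triangle with vertices `v, v+(0,1), v+(1,1)`. -/
structure Tri where
  v : ℤ × ℤ
  up : Bool
deriving DecidableEq

namespace Tri

/-- The open triangle in the plane realizing a combinatorial triangle. -/
def toSet (T : Tri) : Set Pt :=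
  if T.up then
    {p | (T.v.1 : ℝ) < p.1 ∧ p.1 - (T.v.1 : ℝ) < p.2 - (T.v.2 : ℝ) ∧ p.2 < (T.v.2 : ℝ) + 1}
  else
    {p | (T.v.2 : ℝ) < p.2 ∧ p.2 - (T.v.2 : ℝ) < p.1 - (T.v.1 : ℝ) ∧ p.1 < (T.v.1 : ℝ) + 1}

/-- The closed triangle. -/
def cl (T : Tri) : Set Pt := closure T.toSet

/-- The three lattice vertices of a triangle. -/
def vertices (T : Tri) : Finset (ℤ × ℤ) :=
  if T.up then {T.v, (T.v.1, T.v.2 + 1), (T.v.1 + 1, T.v.2 + 1)}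
  else {T.v, (T.v.1 + 1, T.v.2), (T.v.1 + 1, T.v.2 + 1)}

end Tri

/-- Edges of the grid: a lattice point together with a direction type
(`0 ↦ e₁ = (1,0)`, `1 ↦ e₂ = (0,1)`, `2 ↦ e₃ = (1,1)`); the edge of type `i`
at `v` joins `v` to `v + eᵢ`. -/
abbrev Edge := (ℤ × ℤ) × Fin 3

/-- The three direction vectors `e₁, e₂, e₃`. -/
def dirZ : Fin 3 → ℤ × ℤ := ![(1, 0), (0, 1), (1, 1)]

/-- The three edges of a triangle. -/
def Tri.edges (T : Tri) : Finset Edge :=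
  if T.up then {((T.v.1, T.v.2 + 1), 0), (T.v, 1), (T.v, 2)}
  else {(T.v, 0), ((T.v.1 + 1, T.v.2), 1), (T.v, 2)}

/-- The open segment realizing an edge. -/
def Edge.seg (ε : Edge) : Set Pt :=
  {p | ∃ t : ℝ, 0 < t ∧ t < 1 ∧
    p = ((ε.1.1 : ℝ) + t * ((dirZ ε.2).1 : ℝ), (ε.1.2 : ℝ) + t * ((dirZ ε.2).2 : ℝ))}

/-- `M*`: the union of the closed triangles of a multicell domain. -/
def Mstar (M : Finset Tri) : Set Pt := ⋃ T ∈ M, T.cl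

/-- `ℙ(M,V)`: continuous functions on `M*` whose restriction to each triangle
of `M` is the restriction of a polynomial in `V`. -/
def PP (M : Finset Tri) (V : Set BPoly) : Set (Pt → ℝ) :=
  {f | ContinuousOn f (Mstar M) ∧ ∀ T ∈ M, ∃ q ∈ V, EqOn f (evalP q) T.toSet}

/-- The diamond of an edge: union of the closed triangles of `M` having `ε`
as an edge. -/
def diamond (M : Finset Tri) (ε : Edge) : Set Pt :=
  ⋃ T ∈ M.filter (fun T => ε ∈ T.edges), T.cl

/-- The spline space with edge smoothness `d` on the multicell domain `M`:
piecewise polynomials (pieces from `V`) which are `C^{dᵢ}` on the diamond of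
every edge of type `i` of `M`. -/
def SplineSpace (M : Finset Tri) (V : Set BPoly) (d : Fin 3 → ℕ) : Set (Pt → ℝ) :=
  {f | f ∈ PP M V ∧
    ∀ ε : Edge, (∃ T ∈ M, ε ∈ T.edges) → ContDiffOn ℝ (d ε.2) f (diamond M ε)}

/-- Directional derivative of a polynomial along an integer vector. -/
def dirD (e : ℤ × ℤ) (q : BPoly) : BPoly :=
  (e.1 : ℝ) • MvPolynomial.pderiv (0 : Fin 2) q + (e.2 : ℝ) • MvPolynomial.pderiv (1 : Fin 2) q

/-- The mixed directional derivative operator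
`D_s = (∂_{e₁})^{s₁} (∂_{e₂})^{s₂} (∂_{e₃})^{s₃}`. -/
def Dmix (s : Fin 3 → ℕ) (q : BPoly) : BPoly :=
  (dirD (dirZ 0))^[s 0] ((dirD (dirZ 1))^[s 1] ((dirD (dirZ 2))^[s 2] q))

/-- The index sets `Iᵢ^d`; `I₁^d = {s | s₂+s₃ ≤ d₁}` and cyclically. -/
def Iset (d : Fin 3 → ℕ) (i : Fin 3) : Set (Fin 3 → ℕ) :=
  {s | s (i + 1) + s (i + 2) ≤ d i}

/-- Two triangles of the grid are adjacent if they are distinct and share an edge. -/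
def Adj (T T' : Tri) : Prop := T ≠ T' ∧ ∃ ε : Edge, ε ∈ T.edges ∧ ε ∈ T'.edges

/-- `c` is an edge-connected chain of length `m` from `T` to `T'`. -/
def TriIsChain (T T' : Tri) (m : ℕ) (c : ℕ → Tri) : Prop :=
  c 0 = T ∧ c m = T' ∧ ∀ k < m, Adj (c k) (c (k + 1))

/-- The set of types of the edges crossed by a chain. -/
def chainTypes (m : ℕ) (c : ℕ → Tri) : Set (Fin 3) :=
  {i | ∃ k < m, ∃ ε : Edge, ε.2 = i ∧ ε ∈ (c k).edges ∧ ε ∈ (c (k + 1)).edges}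

/-- Minimal length of an edge-connected chain between two triangles. -/
def minLen (T T' : Tri) : ℕ := sInf {m | ∃ c, TriIsChain T T' m c}

/-- The smoothness type `SmType(△,△')`: the types of the edges crossed by a
shortest edge-connected chain from `△` to `△'`. -/
def SmType (T T' : Tri) : Set (Fin 3) :=
  {i | ∃ c, TriIsChain T T' (minLen T T') c ∧ i ∈ chainTypes (minLen T T') c}

/-- `q` is the polynomial piece of `f` on the triangle `T`. -/
def IsPiece (f : Pt → ℝ) (T : Tri) (q : BPoly) : Prop := EqOn f (evalP q) T.toSet

/-- The strongly regular spline space `Ŝ^d(M,V)`: piecewise polynomials such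
that for any two triangles of `M` with intersecting closures, the derivatives
`D_s`, `s ∈ ⋂_{i ∈ SmType(△,△')} Iᵢ^d`, of the two polynomial pieces agree on the
intersection of the closures (i.e. `D_s f` is continuous there). -/
def StrongSpline (M : Finset Tri) (V : Set BPoly) (d : Fin 3 → ℕ) : Set (Pt → ℝ) :=
  {f | f ∈ PP M V ∧
    ∀ T ∈ M, ∀ T' ∈ M, (T.cl ∩ T'.cl).Nonempty →
      ∀ s : Fin 3 → ℕ, (∀ i ∈ SmType T T', s ∈ Iset d i) →
        ∀ q q' : BPoly, IsPiece f T q → IsPiece f T' q' →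
          ∀ x ∈ T.cl ∩ T'.cl, evalP (Dmix s q) x = evalP (Dmix s q') x}

/-- Kissing triangles: the closures intersect in exactly one point. -/
def Kissing (T T' : Tri) : Prop := ∃ p : Pt, T.cl ∩ T'.cl = {p}

/-- An over-concave vertex of `M`: exactly one triangle of `star(ν)` is
missing from `M`. -/
def OverConcave (M : Finset Tri) (ν : ℤ × ℤ) : Prop :=
  ∃! T : Tri, ν ∈ T.vertices ∧ T ∉ M

/- ## Type-I box splines -/

/-- The Courant hat function `B_{(1,1,1)}`: the piecewise linear function on
`G` supported on `star((1,1))` with value `1` at `(1,1)` and `0` at all other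
lattice points. -/
def hat (p : Pt) : ℝ :=
  max 0 (min (min (min p.1 p.2) (min (2 - p.1) (2 - p.2)))
             (min (1 - (p.1 - p.2)) (1 + (p.1 - p.2))))

/-- The type-I box spline `B_{(n₁,n₂,n₃)}`, defined by repeated directional
convolution starting from the Courant hat function (the result is independent
of the order of the convolutions); junk value `0` if some `nᵢ = 0`. -/
noncomputable def boxN : ℕ → ℕ → ℕ → Pt → ℝ
  | 0, _, _, _ => 0
  | _ + 1, 0, _, _ => 0
  | _ + 1, _ + 1, 0, _ => 0
  | 1, 1, 1, p => hat p
  | a + 2, b + 1, c + 1, p =>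
      ∫ t in (0:ℝ)..1, boxN (a + 1) (b + 1) (c + 1) (p.1 - t, p.2)
  | 1, b + 2, c + 1, p =>
      ∫ t in (0:ℝ)..1, boxN 1 (b + 1) (c + 1) (p.1, p.2 - t)
  | 1, 1, c + 2, p =>
      ∫ t in (0:ℝ)..1, boxN 1 1 (c + 1) (p.1 - t, p.2 - t)
  termination_by a b c _ => a + b + c
  decreasing_by all_goals omega

/-- The translate `B_n(· - w)` of the box spline. -/
def trBox (n₁ n₂ n₃ : ℕ) (w : ℤ × ℤ) (p : Pt) : ℝ :=
  boxN n₁ n₂ n₃ (p.1 - (w.1 : ℝ), p.2 - (w.2 : ℝ))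

/-- `Supp_n(△̂)`: lattice translates of `B_n` that do not vanish identically
on the triangle `T`. -/
def activeSet (n₁ n₂ n₃ : ℕ) (T : Tri) : Set (ℤ × ℤ) :=
  {w | ¬ ∀ p ∈ T.toSet, trBox n₁ n₂ n₃ w p = 0}

/-- `c` is the coefficient vector of the polynomial `q` with respect to the
active box-spline translates on `T`:  `q|_T = Σ_β λ_T^β(q)·β|_T`. -/
def Represents (n₁ n₂ n₃ : ℕ) (T : Tri) (q : BPoly) (c : (ℤ × ℤ) →₀ ℝ) : Prop :=
  ↑c.support ⊆ activeSet n₁ n₂ n₃ T ∧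
    ∀ p ∈ T.toSet, evalP q p = c.sum fun w a => a * trBox n₁ n₂ n₃ w p

/-- `V_n` (relative to the triangle `T`): polynomials whose restriction to `T`
is a linear combination of the active box-spline translates on `T`. -/
def VSpace (n₁ n₂ n₃ : ℕ) (T : Tri) : Set BPoly :=
  {q | ∃ c, Represents n₁ n₂ n₃ T q c}


/-!
The second claim is immediate: if `s₁ + s₂ + s₃ ≤ min dᵢ` then `s` lies in every `Iᵢ^d`.

For the first, let `ε` be an edge of type `i` shared by two triangles of `M`, with pieces `q`
and `q'`. The smoothness type of the pair is `{i}`, so the strong regularity gives that the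
derivatives of `q' - q` transverse to `ε`, up to order `dᵢ`, vanish on the edge, hence on its whole
line `ℓ = 0`. Therefore `ℓ ^ (dᵢ + 1)` divides `q' - q = ℓ ^ (dᵢ + 1) * r`, and on the diamond
`f = q + (max ℓ 0) ^ (dᵢ + 1) * r`, which is `C^dᵢ` because `t ↦ (max t 0) ^ (k + 1)` is `C^k`.
-/

theorem Derivation.iterate_succ_mul_of_eq_one {R A : Type*} [CommRing R] [CommRing A] [Algebra R A]
    (D : Derivation R A A) {ℓ : A} (hℓ : D ℓ = 1) (n : ℕ) (h : A) :
    D^[n + 1] (ℓ * h) = ℓ * D^[n + 1] h + (n + 1) • D^[n] h := by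
  induction n with
  | zero => simp [Derivation.leibniz, hℓ]
  | succ n ih =>
    rw [Function.iterate_succ_apply', ih, map_add, map_nsmul, Derivation.leibniz, hℓ,
      ← Function.iterate_succ_apply' D, ← Function.iterate_succ_apply' D]
    simp only [smul_eq_mul, mul_one, succ_nsmul]
    abel

namespace MvPolynomial

variable {σ R : Type*} [CommRing R]

theorem X_sub_dvd_sub_aeval_update [DecidableEq σ] (i : σ) (g p : MvPolynomial σ R) :
    X i - g ∣ p - aeval (Function.update X i g) p := by
  induction p using MvPolynomial.induction_on with
  | C a => simp
  | add p q hp hq => rw [map_add, add_sub_add_comm]; exact dvd_add hp hq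
  | mul_X p j hp =>
    set u := Function.update (X : σ → MvPolynomial σ R) i g
    have hu : X i - g ∣ X j - u j := by
      by_cases hj : j = i
      · subst hj; simp [u]
      · simp [u, hj]
    rw [map_mul, aeval_X, show p * X j - aeval u p * u j =
      (p - aeval u p) * X j + aeval u p * (X j - u j) by ring]
    exact dvd_add (dvd_mul_of_dvd_left hp _) (dvd_mul_of_dvd_right hu _)

theorem X_sub_dvd_of_eval_eq_zero [IsDomain R] [Infinite R] {i : σ} {g h : MvPolynomial σ R}
    (hg : i ∉ g.vars) (H : ∀ x, eval x (X i - g) = 0 → eval x h = 0) : X i - g ∣ h := by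
  classical
  suffices aeval (Function.update X i g) h = 0 by
    simpa only [this, sub_zero] using X_sub_dvd_sub_aeval_update i g h
  refine MvPolynomial.funext fun x => ?_
  set y := Function.update x i (eval x g)
  have hgy : eval y g = eval x g :=
    eval₂Hom_congr' rfl (fun j hj _ => Function.update_of_ne (ne_of_mem_of_not_mem hj hg) _ _) rfl
  have hy : (fun j => eval x (Function.update X i g j)) = y := by
    funext j
    by_cases hj : j = i
    · subst hj; simp [y]
    · simp [y, hj]
  have hcomp : eval x (aeval (Function.update X i g) h) = eval y h := by
    rw [← hy]; exact eval₂Hom_bind₁ _ _ _ _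
  rw [hcomp, map_zero]
  exact H y (by simp [y, hgy])

theorem X_sub_pow_dvd_of_iterate_pderiv_eval_eq_zero {K : Type*} [Field K] [CharZero K]
    {i : σ} {g : MvPolynomial σ K} (hg : i ∉ g.vars) {k : ℕ} {h : MvPolynomial σ K}
    (H : ∀ j ≤ k, ∀ x, eval x (X i - g) = 0 → eval x ((pderiv i)^[j] h) = 0) :
    (X i - g) ^ (k + 1) ∣ h := by
  induction k generalizing h with
  | zero => simpa using X_sub_dvd_of_eval_eq_zero hg (H 0 le_rfl)
  | succ k ih =>
    obtain ⟨h₁, rfl⟩ := X_sub_dvd_of_eval_eq_zero hg (H 0 (Nat.zero_le _))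
    have hℓ : pderiv i (X i - g) = 1 := by
      rw [map_sub, pderiv_X_self, pderiv_eq_zero_of_notMem_vars hg, sub_zero]
    refine pow_succ' (X i - g) (k + 1) ▸ mul_dvd_mul_left _ (ih fun j hj x hx => ?_)
    have := H (j + 1) (by omega) x hx
    rw [Derivation.iterate_succ_mul_of_eq_one _ hℓ, map_add, map_mul, hx, zero_mul, zero_add,
      map_nsmul, smul_eq_zero] at this
    exact this.resolve_left (Nat.succ_ne_zero j)

end MvPolynomial

theorem hasDerivAt_max_zero_pow (m : ℕ) (t : ℝ) :
    HasDerivAt (fun t : ℝ => max t 0 ^ (m + 2)) ((m + 2) * max t 0 ^ (m + 1)) t := by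
  rcases lt_trichotomy t 0 with ht | rfl | ht
  · have hev : (fun t : ℝ => max t 0 ^ (m + 2)) =ᶠ[nhds t] fun _ => 0 := by
      filter_upwards [eventually_lt_nhds ht] with x hx
      simp [max_eq_right hx.le]
    simpa [max_eq_right ht.le] using (hasDerivAt_const t (0 : ℝ)).congr_of_eventuallyEq hev
  · have hneg : HasDerivWithinAt (fun t : ℝ => max t 0 ^ (m + 2)) 0 (Iic 0) 0 :=
      (hasDerivWithinAt_const _ _ (0 : ℝ)).congr
        (fun x hx => by simp [max_eq_right (mem_Iic.1 hx)]) (by simp)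
    have hpos : HasDerivWithinAt (fun t : ℝ => max t 0 ^ (m + 2)) 0 (Ici 0) 0 := by
      simpa using ((hasDerivAt_pow (m + 2) (0 : ℝ)).hasDerivWithinAt (s := Ici 0)).congr
        (fun x hx => by simp [max_eq_left (mem_Ici.1 hx)]) (by simp)
    simpa [← hasDerivWithinAt_univ] using hneg.union hpos
  · have hev : (fun t : ℝ => max t 0 ^ (m + 2)) =ᶠ[nhds t] fun x => x ^ (m + 2) := by
      filter_upwards [eventually_gt_nhds ht] with x hx
      rw [max_eq_left hx.le]
    simpa [max_eq_left ht.le] using (hasDerivAt_pow (m + 2) t).congr_of_eventuallyEq hev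

theorem contDiff_max_zero_pow (n : ℕ) : ContDiff ℝ n (fun t : ℝ => max t 0 ^ (n + 1)) := by
  induction n with
  | zero => simpa using continuous_id.max continuous_const
  | succ n ih =>
    rw [Nat.cast_succ, contDiff_succ_iff_deriv]
    refine ⟨fun t => (hasDerivAt_max_zero_pow n t).differentiableAt, by simp, ?_⟩
    rw [funext fun t => (hasDerivAt_max_zero_pow n t).deriv]
    exact contDiff_const.mul ih

theorem contDiffOn_union_of_eqOn_add_pow_mul {E : Type*} [NormedAddCommGroup E]
    [NormedSpace ℝ E] {k : ℕ} {f g ℓ r : E → ℝ} {A B : Set E}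
    (hg : ContDiff ℝ k g) (hℓ : ContDiff ℝ k ℓ) (hr : ContDiff ℝ k r)
    (hfA : EqOn f g A) (hfB : EqOn f (fun x => g x + ℓ x ^ (k + 1) * r x) B)
    (hA : ∀ x ∈ A, ℓ x ≤ 0) (hB : ∀ x ∈ B, 0 ≤ ℓ x) : ContDiffOn ℝ k f (A ∪ B) := by
  have hglued : ContDiff ℝ k fun x => g x + max (ℓ x) 0 ^ (k + 1) * r x :=
    hg.add (((contDiff_max_zero_pow k).comp hℓ).mul hr)
  refine hglued.contDiffOn.congr ?_
  rintro x (hx | hx)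
  · simp [hfA hx, max_eq_right (hA x hx)]
  · simp [hfB hx, max_eq_left (hB x hx)]

theorem analyticAt_evalP (q : BPoly) (p : Pt) : AnalyticAt ℝ (evalP q) p :=
  AnalyticAt.aeval_mvPolynomial (f := fun p : Pt => ![p.1, p.2])
    (fun i => by fin_cases i <;> simp [analyticAt_fst, analyticAt_snd]) q

theorem contDiff_evalP {n : WithTop ℕ∞} (q : BPoly) : ContDiff ℝ n (evalP q) :=
  AnalyticOnNhd.contDiff fun p _ => analyticAt_evalP q p

theorem continuous_evalP (q : BPoly) : Continuous (evalP q) :=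
  (contDiff_evalP (n := 0) q).continuous

theorem eval_eq_evalP (x : Fin 2 → ℝ) (q : BPoly) : eval x q = evalP q (x 0, x 1) := by
  simp only [evalP]
  congr
  ext i
  fin_cases i <;> rfl

theorem evalP_sub (p q : BPoly) (x : Pt) : evalP (p - q) x = evalP p x - evalP q x := map_sub _ _ _

theorem evalP_add_smul_eq_zero_of_Ioo {q : BPoly} {p w : Pt}
    (h : ∀ t ∈ Ioo (0 : ℝ) 1, evalP q (p + t • w) = 0) (t : ℝ) : evalP q (p + t • w) = 0 := by
  have hana : AnalyticOnNhd ℝ (fun t : ℝ => evalP q (p + t • w)) univ := fun t _ =>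
    (analyticAt_evalP q _).comp (analyticAt_const.add (analyticAt_id.smul analyticAt_const))
  have hzero : (fun t : ℝ => evalP q (p + t • w)) =ᶠ[nhds (1 / 2)] 0 :=
    Filter.eventually_of_mem (Ioo_mem_nhds (by norm_num) (by norm_num)) h
  exact congrFun (hana.eq_of_eventuallyEq analyticOnNhd_const hzero) t

theorem mem_closure_of_forall_add_smul_mem {E : Type*} [AddCommGroup E] [Module ℝ E]
    [TopologicalSpace E] [ContinuousAdd E] [ContinuousSMul ℝ E] {S : Set E} {p w : E} {η : ℝ}
    (hη : 0 < η) (h : ∀ δ ∈ Ioo 0 η, p + δ • w ∈ S) : p ∈ closure S := by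
  have hlim : Filter.Tendsto (fun δ : ℝ => p + δ • w) (nhdsWithin 0 (Ioi 0)) (nhds p) := by
    refine (Continuous.tendsto' ?_ (0 : ℝ) p (by simp)).mono_left nhdsWithin_le_nhds
    fun_prop
  exact mem_closure_of_tendsto hlim (Filter.eventually_of_mem (Ioo_mem_nhdsGT hη) h)

theorem minLen_eq_one {T T' : Tri} (hadj : Adj T T') : minLen T T' = 1 := by
  have h₁ : 1 ∈ {m | ∃ c, TriIsChain T T' m c} :=
    ⟨fun k => if k = 0 then T else T', by simp, by simp, fun k hk => by
      obtain rfl : k = 0 := by omega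
      simpa using hadj⟩
  refine le_antisymm (Nat.sInf_le h₁) (Nat.one_le_iff_ne_zero.2 fun h₀ => ?_)
  rcases Nat.sInf_eq_zero.1 h₀ with ⟨c, hc0, hc1, -⟩ | h
  · exact hadj.1 (hc0.symm.trans hc1)
  · exact h.subset h₁

theorem dirD_dirZ_castSucc (n : Fin 2) : dirD (dirZ n.castSucc) = ⇑(pderiv n) := by
  funext q
  fin_cases n <;> simp [dirD, dirZ]

theorem Dmix_single_castSucc (n : Fin 2) (j : ℕ) (q : BPoly) :
    Dmix (Pi.single n.castSucc j) q = (pderiv n)^[j] q := by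
  fin_cases n <;> simp [Dmix, ← dirD_dirZ_castSucc]

theorem mem_Iset_of_le_min {d s : Fin 3 → ℕ} (hs : s 0 + s 1 + s 2 ≤ min (min (d 0) (d 1)) (d 2))
    (i : Fin 3) : s ∈ Iset d i := by
  fin_cases i <;> simp [Iset] <;> omega

namespace Edge

def negTri (ε : Edge) : Tri :=
  ![⟨(ε.1.1, ε.1.2 - 1), true⟩, ⟨(ε.1.1 - 1, ε.1.2), false⟩, ⟨ε.1, true⟩] ε.2

def posTri (ε : Edge) : Tri := ![⟨ε.1, false⟩, ⟨ε.1, true⟩, ⟨ε.1, false⟩] ε.2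

/-- The line of `ε` is `{X normalVar = graphFn}`, where `graphFn` does not involve
`X normalVar`; `form` vanishes on it, is `≤ 0` on `negTri` and `≥ 0` on `posTri`. -/
def normalVar (ε : Edge) : Fin 2 := ![1, 0, 0] ε.2

def graphFn (ε : Edge) : BPoly :=
  ![C (ε.1.2 : ℝ), C (ε.1.1 : ℝ), X 1 + C ((ε.1.1 : ℝ) - ε.1.2)] ε.2

def form (ε : Edge) : BPoly := X ε.normalVar - ε.graphFn

def origin (ε : Edge) : Pt := (ε.1.1, ε.1.2)

def dir (ε : Edge) : Pt := ((dirZ ε.2).1, (dirZ ε.2).2)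

theorem mem_edges_iff (ε : Edge) (T : Tri) : ε ∈ T.edges ↔ T = ε.negTri ∨ T = ε.posTri := by
  obtain ⟨⟨v1, v2⟩, u⟩ := T
  obtain ⟨⟨a, b⟩, i⟩ := ε
  fin_cases i <;> cases u <;>
    simp [Tri.edges, negTri, posTri, Prod.ext_iff, Fin.ext_iff] <;> omega

theorem negTri_ne_posTri (ε : Edge) : ε.negTri ≠ ε.posTri := by
  obtain ⟨⟨a, b⟩, i⟩ := ε
  fin_cases i <;> simp [negTri, posTri]

theorem eq_of_mem_edges {T T' : Tri} (hne : T ≠ T') {ε ε' : Edge} (h₁ : ε ∈ T.edges)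
    (h₂ : ε ∈ T'.edges) (h₃ : ε' ∈ T.edges) (h₄ : ε' ∈ T'.edges) : ε' = ε := by
  rw [mem_edges_iff] at h₁ h₂ h₃ h₄
  obtain ⟨⟨a, b⟩, i⟩ := ε
  obtain ⟨⟨a', b'⟩, i'⟩ := ε'
  rcases h₁ with rfl | rfl <;> rcases h₂ with rfl | rfl <;> (try exact absurd rfl hne) <;>
    fin_cases i <;> fin_cases i' <;> simp [negTri, posTri] at h₃ h₄ ⊢ <;> omega

theorem origin_add_smul_mem_cl (ε : Edge) {t : ℝ} (ht : t ∈ Ioo 0 1) :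
    ε.origin + t • ε.dir ∈ ε.negTri.cl ∩ ε.posTri.cl := by
  obtain ⟨⟨a, b⟩, i⟩ := ε
  obtain ⟨ht0, ht1⟩ := ht
  fin_cases i <;> [
    refine ⟨mem_closure_of_forall_add_smul_mem (w := (0, -1)) (sub_pos.2 ht1) ?_,
      mem_closure_of_forall_add_smul_mem (w := (0, 1)) ht0 ?_⟩;
    refine ⟨mem_closure_of_forall_add_smul_mem (w := (-1, 0)) (sub_pos.2 ht1) ?_,
      mem_closure_of_forall_add_smul_mem (w := (1, 0)) ht0 ?_⟩;
    refine ⟨mem_closure_of_forall_add_smul_mem (w := (0, 1)) (sub_pos.2 ht1) ?_,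
      mem_closure_of_forall_add_smul_mem (w := (1, 0)) (sub_pos.2 ht1) ?_⟩] <;>
  · rintro δ ⟨hδ0, hδ1⟩
    simp [negTri, posTri, Tri.toSet, origin, dir, dirZ]
    refine ⟨by linarith, by linarith, by linarith⟩

theorem form_nonpos {ε : Edge} {p : Pt} (hp : p ∈ ε.negTri.cl) : evalP ε.form p ≤ 0 := by
  refine closure_minimal (fun p hp => ?_) (isClosed_le (continuous_evalP _)
    continuous_const) hp
  obtain ⟨⟨a, b⟩, i⟩ := ε
  fin_cases i <;> simp [negTri, Tri.toSet, form, normalVar, graphFn, evalP] at hp ⊢ <;> linarith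

theorem form_nonneg {ε : Edge} {p : Pt} (hp : p ∈ ε.posTri.cl) : 0 ≤ evalP ε.form p := by
  refine closure_minimal (fun p hp => ?_) (isClosed_le continuous_const
    (continuous_evalP _)) hp
  obtain ⟨⟨a, b⟩, i⟩ := ε
  fin_cases i <;> simp [posTri, Tri.toSet, form, normalVar, graphFn, evalP] at hp ⊢ <;> linarith

theorem normalVar_notMem_vars_graphFn (ε : Edge) : ε.normalVar ∉ ε.graphFn.vars := by
  obtain ⟨⟨a, b⟩, i⟩ := ε
  fin_cases i
  · show (1 : Fin 2) ∉ (C (b : ℝ) : BPoly).vars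
    rw [vars_C]; exact Finset.notMem_empty _
  · show (0 : Fin 2) ∉ (C (a : ℝ) : BPoly).vars
    rw [vars_C]; exact Finset.notMem_empty _
  · show (0 : Fin 2) ∉ (X 1 + C ((a : ℝ) - b) : BPoly).vars
    intro h
    have h' := vars_add_subset _ _ h
    rw [Finset.mem_union, vars_X, vars_C] at h'
    simp at h'

theorem exists_eq_origin_add_smul {ε : Edge} {p : Pt} (hp : evalP ε.form p = 0) :
    ∃ t : ℝ, p = ε.origin + t • ε.dir := by
  obtain ⟨⟨a, b⟩, i⟩ := ε
  obtain ⟨x, y⟩ := p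
  fin_cases i <;> simp [form, normalVar, graphFn, evalP, origin, dir, dirZ, Prod.ext_iff] at hp ⊢
  · exact ⟨⟨x - a, by ring⟩, by linarith⟩
  · exact ⟨by linarith, y - b, by ring⟩
  · exact ⟨y - b, by linarith, by ring⟩

theorem smType_negTri_posTri_subset (ε : Edge) : SmType ε.negTri ε.posTri ⊆ {ε.2} := by
  have hneg : ε ∈ ε.negTri.edges := (ε.mem_edges_iff _).2 (.inl rfl)
  have hpos : ε ∈ ε.posTri.edges := (ε.mem_edges_iff _).2 (.inr rfl)
  have hadj : Adj ε.negTri ε.posTri := ⟨ε.negTri_ne_posTri, ε, hneg, hpos⟩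
  rintro i ⟨c, ⟨hc0, hc1, -⟩, k, hk, ε', rfl, h₁, h₂⟩
  rw [minLen_eq_one hadj] at hc1 hk
  obtain rfl : k = 0 := by omega
  rw [hc0] at h₁
  rw [hc1] at h₂
  rw [eq_of_mem_edges hadj.1 hneg hpos h₁ h₂]
  rfl

theorem single_normalVar_mem_Iset {d : Fin 3 → ℕ} (ε : Edge) {j : ℕ} (hj : j ≤ d ε.2) :
    Pi.single ε.normalVar.castSucc j ∈ Iset d ε.2 := by
  obtain ⟨v, i⟩ := ε
  fin_cases i <;> simpa [Iset, normalVar, Pi.single_apply] using hj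

end Edge

theorem IsPiece.eqOn_cl {M : Finset Tri} {V : Set BPoly} {f : Pt → ℝ} (hf : f ∈ PP M V)
    {T : Tri} (hT : T ∈ M) {q : BPoly} (hq : IsPiece f T q) : EqOn f (evalP q) T.cl :=
  hq.of_subset_closure (hf.1.mono (subset_biUnion_of_mem hT))
    (continuous_evalP q).continuousOn subset_closure subset_rfl

theorem contDiffOn_cl_of_mem_PP {M : Finset Tri} {V : Set BPoly} {f : Pt → ℝ} (hf : f ∈ PP M V)
    {T : Tri} (hT : T ∈ M) (n : WithTop ℕ∞) : ContDiffOn ℝ n f T.cl := by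
  obtain ⟨q, -, hq⟩ := hf.2 T hT
  exact (contDiff_evalP q).contDiffOn.congr (IsPiece.eqOn_cl hf hT hq)

theorem diamond_subset_union (M : Finset Tri) (ε : Edge) :
    diamond M ε ⊆ ε.negTri.cl ∪ ε.posTri.cl := by
  simp only [diamond, iUnion_subset_iff, Finset.mem_filter]
  rintro T ⟨-, hT⟩
  rcases (ε.mem_edges_iff T).1 hT with rfl | rfl
  exacts [subset_union_left, subset_union_right]

theorem diamond_subset_cl {M : Finset Tri} {ε : Edge} {T₀ : Tri}
    (h : ∀ T ∈ M, ε ∈ T.edges → T = T₀) : diamond M ε ⊆ T₀.cl := by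
  simp only [diamond, iUnion_subset_iff, Finset.mem_filter]
  rintro T ⟨hT, hε⟩
  rw [h T hT hε]

namespace StrongSpline

variable {M : Finset Tri} {V : Set BPoly} {d : Fin 3 → ℕ} {f : Pt → ℝ}

theorem contDiffOn_negTri_union_posTri (hf : f ∈ StrongSpline M V d) {ε : Edge}
    (hneg : ε.negTri ∈ M) (hpos : ε.posTri ∈ M) :
    ContDiffOn ℝ (d ε.2) f (ε.negTri.cl ∪ ε.posTri.cl) := by
  obtain ⟨hPP, hstrong⟩ := hf
  obtain ⟨q, -, hq⟩ := hPP.2 _ hneg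
  obtain ⟨q', -, hq'⟩ := hPP.2 _ hpos
  have hseg : ∀ j ≤ d ε.2, ∀ t ∈ Ioo (0 : ℝ) 1,
      evalP ((pderiv ε.normalVar)^[j] (q' - q)) (ε.origin + t • ε.dir) = 0 := by
    intro j hj t ht
    have hmem := ε.origin_add_smul_mem_cl ht
    have := hstrong _ hneg _ hpos ⟨_, hmem⟩ _
      (fun i hi => (ε.smType_negTri_posTri_subset hi) ▸ ε.single_normalVar_mem_Iset hj)
      q q' hq hq' _ hmem
    rw [Dmix_single_castSucc, Dmix_single_castSucc] at this
    rw [iterate_map_sub, evalP_sub, this, sub_self]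
  obtain ⟨r, hr⟩ : ε.form ^ (d ε.2 + 1) ∣ q' - q :=
    X_sub_pow_dvd_of_iterate_pderiv_eval_eq_zero ε.normalVar_notMem_vars_graphFn
      fun j hj x hx => by
        rw [eval_eq_evalP] at hx ⊢
        obtain ⟨t, ht⟩ := ε.exists_eq_origin_add_smul hx
        rw [ht]
        exact evalP_add_smul_eq_zero_of_Ioo (hseg j hj) t
  refine contDiffOn_union_of_eqOn_add_pow_mul (contDiff_evalP q) (contDiff_evalP ε.form)
    (contDiff_evalP r) (IsPiece.eqOn_cl hPP hneg hq) (fun x hx => ?_)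
    (fun x => Edge.form_nonpos) (fun x => Edge.form_nonneg)
  rw [IsPiece.eqOn_cl hPP hpos hq' hx, eq_add_of_sub_eq' hr]
  simp [evalP]

theorem contDiffOn_diamond (hf : f ∈ StrongSpline M V d) {ε : Edge}
    (hε : ∃ T ∈ M, ε ∈ T.edges) : ContDiffOn ℝ (d ε.2) f (diamond M ε) := by
  obtain ⟨T₀, hT₀, hεT₀⟩ := hε
  by_cases hboth : ε.negTri ∈ M ∧ ε.posTri ∈ M
  · exact (contDiffOn_negTri_union_posTri hf hboth.1 hboth.2).mono (diamond_subset_union M ε)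
  refine (contDiffOn_cl_of_mem_PP hf.1 hT₀ _).mono (diamond_subset_cl fun T hT hεT => ?_)
  rcases (ε.mem_edges_iff _).1 hεT₀ with rfl | rfl <;>
    rcases (ε.mem_edges_iff _).1 hεT with rfl | rfl <;> tauto

end StrongSpline

theorem statement14_general (M : Finset Tri) (V : Submodule ℝ BPoly)
    (d : Fin 3 → ℕ) :
    StrongSpline M (V : Set BPoly) d ⊆ SplineSpace M (V : Set BPoly) d ∧
    ∀ f ∈ StrongSpline M (V : Set BPoly) d, ∀ s : Fin 3 → ℕ,
      s 0 + s 1 + s 2 ≤ min (min (d 0) (d 1)) (d 2) →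
      ∀ T ∈ M, ∀ T' ∈ M, ∀ q q' : BPoly, IsPiece f T q → IsPiece f T' q' →
        ∀ x ∈ T.cl ∩ T'.cl, evalP (Dmix s q) x = evalP (Dmix s q') x :=
  ⟨fun _ hf => ⟨hf.1, fun _ hε => StrongSpline.contDiffOn_diamond hf hε⟩,
    fun _ hf s hs T hT T' hT' q q' hq hq' x hx =>
      hf.2 T hT T' hT' ⟨x, hx⟩ s (fun i _ => mem_Iset_of_le_min hs i) q q' hq hq' x hx⟩

/-- `Ŝ^d(M,V) ⊆ S^d(M,V)`, and every strongly regular spline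
is globally of class `C^r` on `M*` with `r = min{d₁,d₂,d₃}`: all derivatives
`D_s` with `s₁+s₂+s₃ ≤ r` of its polynomial pieces agree wherever the closed
triangles of `M` meet. -/
theorem statement14 (M : Finset Tri) (hM : M.Nonempty) (V : Submodule ℝ BPoly)
    (d : Fin 3 → ℕ) :
    StrongSpline M (V : Set BPoly) d ⊆ SplineSpace M (V : Set BPoly) d ∧
    ∀ f ∈ StrongSpline M (V : Set BPoly) d, ∀ s : Fin 3 → ℕ,
      s 0 + s 1 + s 2 ≤ min (min (d 0) (d 1)) (d 2) →
      ∀ T ∈ M, ∀ T' ∈ M, ∀ q q' : BPoly, IsPiece f T q → IsPiece f T' q' →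
        ∀ x ∈ T.cl ∩ T'.cl, evalP (Dmix s q) x = evalP (Dmix s q') x :=
  statement14_general M V d

end
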